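/- arXiv:1911.02325 — 2 statements merged into one kernel-verified Lean document; each statement's English description precedes it below -/
import Mathlib

section
/- Let A be an Artin algebra and C ⊆ mod A a full subcategory closed under direct sums and direct summands with Ω(C) ⊆ C. Then the phi-dimension of C equals the least l such that the induced syzygy endomorphism Ω̄ restricted to Ω̄^l(K_0(C)) is injective, i.e., φdim(C) = min{ l : Ω̄|_{Ω̄^l(K_0(C))} is injective }. -/
open Function

section Syzygies

variable (A : Type) [Ring A]

/-- Bundled (left) `A`-modules with carrier in `Type 0`. -/
abbrev Mdl := ModuleCat.{0} A

/-- `f : P →ₗ[A] M` is a projective cover: `P` is projective, `f` is surjective,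
and no proper submodule of `P` maps onto `M`. -/
def IsProjCover {P M : Type} [AddCommGroup P] [Module A P] [AddCommGroup M] [Module A M]
    (f : P →ₗ[A] M) : Prop :=
  Module.Projective A P ∧ Function.Surjective f ∧
    ∀ N : Submodule A P, N ≠ ⊤ → ¬ Function.Surjective (f ∘ₗ N.subtype)

/-- `S` is (isomorphic to) the syzygy `Ω(M)`, i.e. the kernel of a projective cover of `M`. -/
def IsSyz (S M : Mdl A) : Prop :=
  ∃ (P : Mdl A) (f : P →ₗ[A] M), Module.Finite A P ∧ IsProjCover A f ∧
    Nonempty (S ≃ₗ[A] LinearMap.ker f)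

/-- `S ≅ Ω^n(M)`. -/
def IsNthSyz : ℕ → Mdl A → Mdl A → Prop
  | 0, S, M => Nonempty (S ≃ₗ[A] M)
  | (n + 1), S, M => ∃ T : Mdl A, IsSyz A T M ∧ IsNthSyz n S T

/-- `M ∈ Ω^∞(mod A)`: for every `n`, `M` is an `n`-th syzygy of some finitely
generated module. -/
def MemOmegaInf (M : Mdl A) : Prop :=
  ∀ n : ℕ, ∃ N : Mdl A, Module.Finite A N ∧ IsNthSyz A n M N

/-- `M` is `Ω`-periodic: `Ω^m(M) ≅ M` for some `m ≥ 1`. -/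
def IsPeriodic (M : Mdl A) : Prop := ∃ m : ℕ, 1 ≤ m ∧ IsNthSyz A m M M

/-- Projective dimension of `M` is at most `n`. -/
def pdLE (M : Mdl A) (n : ℕ) : Prop :=
  ∃ S : Mdl A, IsNthSyz A n S M ∧ Module.Projective A S

/-- Projective dimension of `M`, as an element of `ℕ∞` (`⊤` = infinite). -/
noncomputable def pd (M : Mdl A) : ℕ∞ :=
  sInf {l : ℕ∞ | ∃ n : ℕ, l = n ∧ pdLE A M n}

/-- A doubly infinite exact complex of finitely generated projectives which stays
exact after applying `Hom(-, Q)` for every projective `Q` (total acyclicity). -/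
def IsTotallyAcyclic (P : ℤ → Mdl A) (d : ∀ i : ℤ, P i →ₗ[A] P (i + 1)) : Prop :=
  (∀ i, Module.Projective A (P i)) ∧ (∀ i, Module.Finite A (P i)) ∧
  (∀ i, LinearMap.range (d i) = LinearMap.ker (d (i + 1))) ∧
  (∀ (i : ℤ) (N : Mdl A), Module.Projective A N →
    ∀ g : P (i + 1) →ₗ[A] N, g ∘ₗ d i = 0 → ∃ h : P (i + 1 + 1) →ₗ[A] N, h ∘ₗ d (i + 1) = g)

/-- `M` is Gorenstein projective: a cycle of a totally acyclic complex of projectives. -/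
def IsGorensteinProj (M : Mdl A) : Prop :=
  ∃ (P : ℤ → Mdl A) (d : ∀ i : ℤ, P i →ₗ[A] P (i + 1)),
    IsTotallyAcyclic A P d ∧ Nonempty (M ≃ₗ[A] LinearMap.ker (d 0))

/-- `N` is a direct summand of `M`. -/
def Summand (N M : Mdl A) : Prop := ∃ L : Mdl A, Nonempty (M ≃ₗ[A] N × L)

/-- `M` is indecomposable. -/
def Indec (M : Mdl A) : Prop :=
  Nontrivial M ∧ ∀ (N L : Mdl A), Nonempty (M ≃ₗ[A] N × L) → Subsingleton N ∨ Subsingleton L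

/-- `A` is syzygy finite (of `Ω^n`-finite representation type for some `n`): there are
finitely many indecomposables occurring as direct summands of `n`-th syzygies. -/
def SyzygyFinite : Prop :=
  ∃ (n : ℕ) (l : List (Mdl A)), ∀ M S N : Mdl A, Module.Finite A M →
    IsNthSyz A n S M → Indec A N → Summand A N S → ∃ L ∈ l, Nonempty (N ≃ₗ[A] L)

/-- Direct sum of a list of modules. -/
def listProd : List (Mdl A) → Mdl A
  | [] => ModuleCat.of A PUnit
  | N :: t => ModuleCat.of A (N × (listProd t))

open scoped Classical in
/-- `‖M‖`: the number (with multiplicity) of indecomposable direct summands of `M`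
having infinite projective dimension. -/
noncomputable def normVal (M : Mdl A) : ℕ :=
  sSup {n : ℕ | ∃ l : List (Mdl A), Nonempty (M ≃ₗ[A] listProd A l) ∧
    (∀ N ∈ l, Indec A N) ∧ n = l.countP (fun N => decide (pd A N = ⊤))}

end Syzygies

section K0

variable (A : Type) [Ring A]

/-- Finitely generated bundled `A`-modules. -/
def FGMod : Type 1 := {M : Mdl A // Module.Finite A M}

/-- The relations defining `K₀(A)`: isomorphic modules are identified, the class of a
direct sum is the sum of the classes, and classes of projectives vanish. -/
def K0Rels : AddSubgroup (FreeAbelianGroup (FGMod A)) :=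
  AddSubgroup.closure
    ({x | ∃ M N : FGMod A, Nonempty (↥M.1 ≃ₗ[A] ↥N.1) ∧
        x = FreeAbelianGroup.of M - FreeAbelianGroup.of N} ∪
     {x | ∃ P : FGMod A, Module.Projective A P.1 ∧ x = FreeAbelianGroup.of P} ∪
     {x | ∃ M N S : FGMod A, Nonempty (↥S.1 ≃ₗ[A] ↥M.1 × ↥N.1) ∧
        x = FreeAbelianGroup.of S - FreeAbelianGroup.of M - FreeAbelianGroup.of N})

/-- The Igusa–Todorov group `K₀(A)`: free abelian group on f.g. modules modulo the relations
`[M ⊕ N] = [M] + [N]`, `[P] = 0` for `P` projective (and `[M] = [N]` for `M ≅ N`). -/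
def K0 : Type 1 := FreeAbelianGroup (FGMod A) ⧸ K0Rels A

instance : AddCommGroup (K0 A) :=
  inferInstanceAs (AddCommGroup (FreeAbelianGroup (FGMod A) ⧸ K0Rels A))

/-- The class `[M] ∈ K₀(A)`. -/
def clsK0 (M : FGMod A) : K0 A := QuotientAddGroup.mk (FreeAbelianGroup.of M)

/-- `ω` is the endomorphism `Ω̄` of `K₀(A)` induced by the syzygy operator. -/
def IsSyzygyOperator (ω : K0 A →+ K0 A) : Prop :=
  ∀ M S : FGMod A, IsSyz A S.1 M.1 → ω (clsK0 A M) = clsK0 A S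

/-- `⟨add M⟩`: the subgroup of `K₀(A)` generated by classes of direct summands of `M`. -/
def addSubgrp (M : Mdl A) : AddSubgroup (K0 A) :=
  AddSubgroup.closure (clsK0 A '' {N : FGMod A | Summand A N.1 M})

/-- The Igusa–Todorov function `φ` (relative to the syzygy operator `ω`), with values
in `ℕ∞`: the least `l` such that `ω` is injective on `ω^[l+s]⟨add M⟩` for all `s`. -/
noncomputable def phiIT (ω : K0 A →+ K0 A) (M : Mdl A) : ℕ∞ :=
  sInf {x : ℕ∞ | ∃ l : ℕ, x = l ∧ ∀ s : ℕ,
    Set.InjOn ω ((⇑ω)^[l + s] '' ((addSubgrp A M : AddSubgroup (K0 A)) : Set (K0 A)))}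

/-- The `φ`-dimension of a class of modules. -/
noncomputable def phidimOn (ω : K0 A →+ K0 A) (C : Set (Mdl A)) : ℕ∞ :=
  sSup ((phiIT A ω) '' C)

end K0

/-!
`K₀(C)` is the union of the subgroups `⟨add M⟩`, `M ∈ C` (and `0`), since `C` is closed under
direct sums. It is `Ω̄`-stable: over an Artin algebra every finitely generated module has a
projective cover (a minimal projective submodule of a free module mapping onto it, minimality
being certified by Fitting's lemma), so `Ω̄[M] = [Ω M]` with `Ω M ∈ C`. Stability makes both
sides least natural numbers satisfying upward closed conditions, and as `Ω̄` is additive,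
injectivity on `Ω̄^l(K₀(C))` is a kernel condition, checked on a single `⟨add M⟩` at a time.
-/

theorem ENat.eq_of_forall_le_natCast_iff {m n : ℕ∞} (h : ∀ a : ℕ, m ≤ a ↔ n ≤ a) : m = n := by
  refine le_antisymm ?_ ?_
  · induction n using ENat.recTopCoe with
    | top => exact le_top
    | coe n => exact (h n).2 le_rfl
  · induction m using ENat.recTopCoe with
    | top => exact le_top
    | coe m => exact (h m).1 le_rfl

theorem sInf_setOf_natCast_le_iff {P : ℕ → Prop} (hP : Monotone P) (n : ℕ) :
    sInf {x : ℕ∞ | ∃ l : ℕ, x = l ∧ P l} ≤ n ↔ P n := by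
  refine ⟨fun h => ?_, fun h => sInf_le ⟨n, rfl, h⟩⟩
  have hne : {x : ℕ∞ | ∃ l : ℕ, x = l ∧ P l}.Nonempty := by
    by_contra hempty
    rw [Set.not_nonempty_iff_eq_empty.mp hempty, sInf_empty] at h
    exact ENat.natCast_ne_top n (top_le_iff.mp h)
  obtain ⟨l, hl, hPl⟩ := csInf_mem hne
  exact hP (by exact_mod_cast hl ▸ h) hPl

section Iterate

variable {α : Type*} (f : α → α)

theorem Set.image_iterate_add_subset {S T : Set α} {m : ℕ} (h : Set.MapsTo f^[m] S T) (n : ℕ) :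
    f^[n + m] '' S ⊆ f^[n] '' T := by
  rintro _ ⟨a, ha, rfl⟩
  exact ⟨f^[m] a, h ha, (Function.iterate_add_apply f n m a).symm⟩

theorem monotone_forall_injOn_iterate_add_image (S : Set α) :
    Monotone fun l => ∀ s, Set.InjOn f (f^[l + s] '' S) := by
  intro l l' hll' h s
  simpa only [← add_assoc, Nat.add_sub_cancel' hll'] using h (l' - l + s)

theorem monotone_injOn_iterate_image {K : Set α} (hK : Set.MapsTo f K K) :
    Monotone fun l => Set.InjOn f (f^[l] '' K) := by
  intro l l' hll' h
  refine h.mono ?_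
  simpa only [Nat.add_sub_cancel' hll'] using Set.image_iterate_add_subset f (hK.iterate (l' - l)) l

end Iterate

theorem forall_injOn_iterate_add_image_iff {G ι : Type*} [AddGroup G] (f : G →+ G)
    {K : AddSubgroup G} (hK : Set.MapsTo f K K) {s : Set ι} {H : ι → AddSubgroup G}
    (hle : ∀ i ∈ s, H i ≤ K) (hcover : ∀ x ∈ K, x = 0 ∨ ∃ i ∈ s, x ∈ H i) (n : ℕ) :
    (∀ i ∈ s, ∀ m, Set.InjOn f ((⇑f)^[n + m] '' H i)) ↔ Set.InjOn f ((⇑f)^[n] '' K) := by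
  refine ⟨fun h => ?_, fun h i hi m => h.mono ?_⟩
  · rintro _ ⟨a, ha, rfl⟩ _ ⟨b, hb, rfl⟩ hab
    have hker : f (f^[n] (a - b)) = 0 := by rw [iterate_map_sub, map_sub, hab, sub_self]
    rw [← sub_eq_zero, ← iterate_map_sub]
    rcases hcover (a - b) (sub_mem ha hb) with h0 | ⟨i, hi, hab_mem⟩
    · rw [h0, iterate_map_zero]
    · exact h i hi 0 ⟨_, hab_mem, rfl⟩ ⟨0, zero_mem _, iterate_map_zero f n⟩
        (hker.trans (map_zero f).symm)
  · exact Set.image_iterate_add_subset f ((hK.iterate m).mono_left (hle i hi)) n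

section ProjectiveCover

variable {A : Type*} [Ring A] {P M : Type*} [AddCommGroup P] [Module A P] [AddCommGroup M]
  [Module A M]

/-- A lift `h : P → N ⊆ P` of `f` satisfies `f ∘ h = f`, and by Fitting's lemma the image of a
high power of `h` is a direct summand of `P`, hence projective, lying in `N`. -/
theorem exists_projective_ne_top_of_surjective_comp_subtype [IsArtinian A P] [IsNoetherian A P]
    [Module.Projective A P] (f : P →ₗ[A] M) (hf : Surjective f) (N : Submodule A P)
    (hN : N ≠ ⊤) (hNs : Surjective (f ∘ₗ N.subtype)) :
    ∃ Q : Submodule A P, Q ≠ ⊤ ∧ Module.Projective A Q ∧ Surjective (f ∘ₗ Q.subtype) := by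
  obtain ⟨g, hg⟩ := Module.projective_lifting_property (f ∘ₗ N.subtype) f hNs
  set h : Module.End A P := N.subtype ∘ₗ g
  have hfh : ∀ k : ℕ, f ∘ₗ h ^ k = f := by
    intro k
    induction k with
    | zero => exact LinearMap.comp_id f
    | succ k ih => rw [pow_succ, Module.End.mul_eq_comp, ← LinearMap.comp_assoc, ih]; exact hg
  obtain ⟨n, hn⟩ := Filter.eventually_atTop.mp h.eventually_isCompl_ker_pow_range_pow
  set Q := LinearMap.range (h ^ (n + 1))
  have hQN : Q ≤ N := by
    rintro _ ⟨x, rfl⟩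
    rw [pow_succ', Module.End.mul_apply]
    exact (g _).2
  have hc : IsCompl Q (LinearMap.ker (h ^ (n + 1))) :=
    (hn (n + 1) n.le_succ).symm
  refine ⟨Q, fun hQ => hN (top_unique (hQ ▸ hQN)), ?_, ?_⟩
  · exact Module.Projective.of_split Q.subtype (Q.projectionOnto _ hc)
      (Q.projectionOnto_comp_subtype hc)
  · intro m
    obtain ⟨x, rfl⟩ := hf m
    exact ⟨⟨(h ^ (n + 1)) x, LinearMap.mem_range_self _ x⟩, LinearMap.congr_fun (hfh (n + 1)) x⟩

end ProjectiveCover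

/-- A minimal projective submodule of `P` still mapping onto `M` is a projective cover:
by Fitting's lemma, any proper submodule of it mapping onto `M` would contain a smaller one. -/
theorem exists_isProjCover_comp_subtype {A P M : Type} [Ring A] [AddCommGroup P] [Module A P]
    [AddCommGroup M] [Module A M] [IsArtinian A P] [IsNoetherian A P] [Module.Projective A P]
    (f : P →ₗ[A] M) (hf : Surjective f) : ∃ Q : Submodule A P, IsProjCover A (f ∘ₗ Q.subtype) := by
  have htop : Module.Projective A (⊤ : Submodule A P) ∧
      Surjective (f ∘ₗ (⊤ : Submodule A P).subtype) :=
    ⟨.of_equiv Submodule.topEquiv.symm, fun m =>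
      let ⟨x, hx⟩ := hf m; ⟨⟨x, trivial⟩, hx⟩⟩
  obtain ⟨Q, ⟨hQproj, hQsurj⟩, hQmin⟩ := IsArtinian.set_has_minimal
    {Q : Submodule A P | Module.Projective A Q ∧ Surjective (f ∘ₗ Q.subtype)} ⟨⊤, htop⟩
  refine ⟨Q, hQproj, hQsurj, fun N hN hNs => ?_⟩
  obtain ⟨Q', hQ'top, hQ'proj, hQ'surj⟩ :=
    exists_projective_ne_top_of_surjective_comp_subtype _ hQsurj N hN hNs
  refine hQmin (Q'.map Q.subtype)
    ⟨.of_equiv (Q'.equivMapOfInjective _ Q.injective_subtype), fun m => ?_⟩ ?_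
  · obtain ⟨x, hx⟩ := hQ'surj m
    exact ⟨⟨_, Submodule.mem_map_of_mem x.2⟩, hx⟩
  · simpa only [Submodule.map_subtype_top] using
      Submodule.map_strictMono_of_injective Q.injective_subtype (lt_top_iff_ne_top.mpr hQ'top)

theorem exists_finite_isSyz (R A : Type) [CommRing R] [IsArtinianRing R] [Ring A] [Algebra R A]
    [Module.Finite R A] (M : Mdl A) [Module.Finite A M] :
    ∃ S : Mdl A, Module.Finite A S ∧ IsSyz A S M := by
  obtain ⟨n, f, hf⟩ := Module.Finite.exists_fin' A M
  have : IsArtinian A (Fin n → A) := isArtinian_of_tower R inferInstance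
  have : IsNoetherian A (Fin n → A) := isNoetherian_of_tower R inferInstance
  obtain ⟨Q, hQ⟩ := exists_isProjCover_comp_subtype f hf
  exact ⟨ModuleCat.of A (LinearMap.ker (f ∘ₗ Q.subtype)), inferInstance,
    ModuleCat.of A Q, f ∘ₗ Q.subtype, inferInstance, hQ, ⟨LinearEquiv.refl A _⟩⟩

section K0OfSubcategory

variable {A : Type} [Ring A]

theorem Summand.refl (M : Mdl A) : Summand A M M :=
  ⟨ModuleCat.of A PUnit, ⟨(LinearEquiv.prodUnique).symm⟩⟩

theorem Summand.trans {N M L : Mdl A} (hNM : Summand A N M) (hML : Summand A M L) :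
    Summand A N L := by
  obtain ⟨X, ⟨e₁⟩⟩ := hNM
  obtain ⟨Y, ⟨e₂⟩⟩ := hML
  exact ⟨ModuleCat.of A (X × Y),
    ⟨e₂.trans ((e₁.prodCongr (.refl A Y)).trans (LinearEquiv.prodAssoc A N X Y))⟩⟩

theorem summand_prod_left (M N : Mdl A) : Summand A M (ModuleCat.of A (M × N)) :=
  ⟨N, ⟨.refl A _⟩⟩

theorem summand_prod_right (M N : Mdl A) : Summand A N (ModuleCat.of A (M × N)) :=
  ⟨M, ⟨LinearEquiv.prodComm A M N⟩⟩

theorem addSubgrp_mono {M M' : Mdl A} (h : Summand A M M') : addSubgrp A M ≤ addSubgrp A M' :=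
  AddSubgroup.closure_mono (Set.image_mono fun _ hN => hN.trans h)

theorem clsK0_mem_addSubgrp (N : FGMod A) : clsK0 A N ∈ addSubgrp A N.1 :=
  AddSubgroup.subset_closure ⟨N, Summand.refl N.1, rfl⟩

theorem phiIT_le_iff (ω : K0 A →+ K0 A) (M : Mdl A) (n : ℕ) :
    phiIT A ω M ≤ n ↔ ∀ s, Set.InjOn ω ((⇑ω)^[n + s] '' addSubgrp A M) :=
  sInf_setOf_natCast_le_iff (monotone_forall_injOn_iterate_add_image _ _) n

variable (A) in
/-- The paper's `K₀(C)`. -/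
def K0Subgroup (C : Set (Mdl A)) : AddSubgroup (K0 A) :=
  AddSubgroup.closure (clsK0 A '' {M : FGMod A | M.1 ∈ C})

variable {C : Set (Mdl A)}

theorem addSubgrp_le_K0Subgroup (hC : ∀ M ∈ C, ∀ N : Mdl A, Summand A N M → N ∈ C) {M : Mdl A}
    (hM : M ∈ C) : addSubgrp A M ≤ K0Subgroup A C :=
  AddSubgroup.closure_mono (Set.image_mono fun N hN => hC M hM N.1 hN)

theorem eq_zero_or_mem_addSubgrp_of_mem_K0Subgroup
    (hC : ∀ M ∈ C, ∀ N ∈ C, ModuleCat.of A (M × N) ∈ C) {x : K0 A} (hx : x ∈ K0Subgroup A C) :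
    x = 0 ∨ ∃ M ∈ C, x ∈ addSubgrp A M := by
  induction hx using AddSubgroup.closure_induction with
  | mem x hx =>
    obtain ⟨N, hN, rfl⟩ := hx
    exact .inr ⟨N.1, hN, clsK0_mem_addSubgrp N⟩
  | zero => exact .inl rfl
  | add x y _ _ ihx ihy =>
    rcases ihx with rfl | ⟨M₁, hM₁, hx⟩
    · rwa [zero_add]
    rcases ihy with rfl | ⟨M₂, hM₂, hy⟩
    · exact .inr ⟨M₁, hM₁, by rwa [add_zero]⟩
    exact .inr ⟨_, hC M₁ hM₁ M₂ hM₂, add_mem (addSubgrp_mono (summand_prod_left M₁ M₂) hx)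
      (addSubgrp_mono (summand_prod_right M₁ M₂) hy)⟩
  | neg x _ ih =>
    rcases ih with rfl | ⟨M, hM, hx⟩
    exacts [.inl neg_zero, .inr ⟨M, hM, neg_mem hx⟩]

theorem mapsTo_K0Subgroup (R : Type) [CommRing R] [IsArtinianRing R] [Algebra R A]
    [Module.Finite R A] {ω : K0 A →+ K0 A} (hω : IsSyzygyOperator A ω)
    (hC : ∀ M ∈ C, ∀ S : Mdl A, IsSyz A S M → S ∈ C) :
    Set.MapsTo ω (K0Subgroup A C) (K0Subgroup A C) := by
  refine fun x hx => (AddSubgroup.closure_le ((K0Subgroup A C).comap ω)).2 ?_ hx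
  rintro _ ⟨N, hN, rfl⟩
  have := N.2
  obtain ⟨S, hSfin, hS⟩ := exists_finite_isSyz R A N.1
  rw [SetLike.mem_coe, AddSubgroup.mem_comap, hω N ⟨S, hSfin⟩ hS]
  exact AddSubgroup.subset_closure ⟨⟨S, hSfin⟩, hC N.1 hN S hS, rfl⟩

end K0OfSubcategory

theorem stmt13_general (R A : Type) [CommRing R] [IsArtinianRing R] [Ring A] [Algebra R A]
    [Module.Finite R A] (ω : K0 A →+ K0 A) (hω : IsSyzygyOperator A ω)
    (C : Set (Mdl A))
    (hCsum : ∀ M ∈ C, ∀ N ∈ C, ModuleCat.of A (↥M × ↥N) ∈ C)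
    (hCsummand : ∀ M ∈ C, ∀ N : Mdl A, Summand A N M → N ∈ C)
    (hCsyz : ∀ M ∈ C, ∀ S : Mdl A, IsSyz A S M → S ∈ C) :
    phidimOn A ω C =
      sInf {x : ℕ∞ | ∃ l : ℕ, x = l ∧ Set.InjOn ω ((⇑ω)^[l] ''
        ((AddSubgroup.closure (clsK0 A '' {M : FGMod A | M.1 ∈ C}) :
          AddSubgroup (K0 A)) : Set (K0 A)))} := by
  change _ = sInf {x : ℕ∞ | ∃ l : ℕ, x = l ∧ Set.InjOn ω ((⇑ω)^[l] '' K0Subgroup A C)}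
  have hK : Set.MapsTo ω (K0Subgroup A C) (K0Subgroup A C) := mapsTo_K0Subgroup R hω hCsyz
  refine ENat.eq_of_forall_le_natCast_iff fun n => ?_
  rw [sInf_setOf_natCast_le_iff (monotone_injOn_iterate_image _ hK), phidimOn, sSup_le_iff,
    Set.forall_mem_image]
  simp only [phiIT_le_iff]
  exact forall_injOn_iterate_add_image_iff ω hK (fun _ => addSubgrp_le_K0Subgroup hCsummand)
    (fun _ => eq_zero_or_mem_addSubgrp_of_mem_K0Subgroup hCsum) n

/-- For an Artin algebra `A` and a full subcategory `C` of `mod A` closed under direct sums,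
direct summands (and isomorphisms) with `Ω(C) ⊆ C`, the `φ`-dimension of `C` equals the
least `l` such that `Ω̄` is injective on `Ω̄^l(K₀(C))`. -/
theorem stmt13 (R A : Type) [CommRing R] [IsArtinianRing R] [Ring A] [Algebra R A]
    [Module.Finite R A] (ω : K0 A →+ K0 A) (hω : IsSyzygyOperator A ω)
    (C : Set (Mdl A)) (hCfin : ∀ M ∈ C, Module.Finite A M)
    (hCiso : ∀ M ∈ C, ∀ N : Mdl A, Nonempty (↥N ≃ₗ[A] ↥M) → N ∈ C)
    (hCsum : ∀ M ∈ C, ∀ N ∈ C, ModuleCat.of A (↥M × ↥N) ∈ C)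
    (hCsummand : ∀ M ∈ C, ∀ N : Mdl A, Summand A N M → N ∈ C)
    (hCsyz : ∀ M ∈ C, ∀ S : Mdl A, IsSyz A S M → S ∈ C) :
    phidimOn A ω C =
      sInf {x : ℕ∞ | ∃ l : ℕ, x = l ∧ Set.InjOn ω ((⇑ω)^[l] ''
        ((AddSubgroup.closure (clsK0 A '' {M : FGMod A | M.1 ∈ C}) :
          AddSubgroup (K0 A)) : Set (K0 A)))} :=
  stmt13_general R A ω hω C hCsum hCsummand hCsyz
end

section
/- Let A = kQ/I be the monomial algebra with quiver Q having vertices 1, 2, arrows α: 1 → 2, β: 2 → 1, γ: 2 → 2, and I = ⟨αβ, γ²⟩. Then the right ideal Aγ (the module generated by the path γ) satisfies Ω(Aγ) ≅ Aγ, i.e., Aγ is a 1-periodic non-projective module; moreover γ is a perfect path. -/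
/-!
Right multiplication by `γ` maps the indecomposable projective `Ae₂` onto `Aγ`, with kernel
`Aγ` again. That kernel squares to zero because `γAγ = 0`, so the map is a projective cover and
`Ω(Aγ) ≅ Aγ`. Were `Aγ` projective, this cover would be injective, but it kills `γ`. Computations
in `A` are done in its basis of the nine nonzero paths, whose linear independence is detected by
the left regular representation on them.

`(γ, γ)` is a perfect pair: a nonzero path `q` into vertex `2` with `γq = 0` must start with `γ`
(the other candidate, `α`, has `γα ≠ 0`), and dually a nonzero path `p` out of vertex `2` with
`pγ = 0` must end with `γ` (the other one, `β`, has `βγ ≠ 0`).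
-/

open Function

section PathAlgebra

open FreeAlgebra

/-- Generators of the path algebra of a quiver: one for each vertex and each arrow. -/
inductive PAGen (V E : Type) : Type
  | vert : V → PAGen V E
  | arr : E → PAGen V E

variable (k : Type) [CommRing k] (V E : Type) [Fintype V] (s t : E → V)

/-- Defining relations of the truncated path algebra `kQ/J^K` of the quiver with vertex set
`V`, arrow set `E`, source map `s` and target map `t`.  Lists of arrows are written in
multiplication order: `[e₁, …, eₙ]` stands for the product `e₁ ⋯ eₙ` (so `eₙ` is traversed
first, and composability means `s eᵢ = t eᵢ₊₁`). -/
inductive TruncRel (K : ℕ) : FreeAlgebra k (PAGen V E) → FreeAlgebra k (PAGen V E) → Prop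
  | vert_idem (v : V) :
      TruncRel K (ι k (PAGen.vert v) * ι k (PAGen.vert v)) (ι k (PAGen.vert v))
  | vert_orth (v w : V) (h : v ≠ w) :
      TruncRel K (ι k (PAGen.vert v) * ι k (PAGen.vert w)) 0
  | sum_vert : TruncRel K (∑ v : V, ι k (PAGen.vert v)) 1
  | arr_tgt (e : E) :
      TruncRel K (ι k (PAGen.vert (t e)) * ι k (PAGen.arr e)) (ι k (PAGen.arr e))
  | arr_src (e : E) :
      TruncRel K (ι k (PAGen.arr e) * ι k (PAGen.vert (s e))) (ι k (PAGen.arr e))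
  | trunc (l : List E) (h : l.length = K) :
      TruncRel K ((l.map (fun e => ι k (PAGen.arr e))).prod) 0

/-- The truncated path algebra `kQ/J^K`. -/
abbrev TruncPathAlg (K : ℕ) : Type := RingQuot (TruncRel k V E s t K)

/-- There is an arrow from `a` to `b`. -/
def StepRel (a b : V) : Prop := ∃ e : E, s e = a ∧ t e = b

/-- The quiver has an oriented cycle. -/
def HasOrientedCycle : Prop := ∃ v : V, Relation.TransGen (StepRel V E s t) v v

/-- The quiver is connected (as an undirected graph). -/
def IsConnectedQ : Prop :=
  ∀ a b : V, Relation.ReflTransGen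
    (fun x y => StepRel V E s t x y ∨ StepRel V E s t y x) a b

/-- `l` is a composable list of arrows (a path), in multiplication order. -/
def IsPathList (l : List E) : Prop := l.Chain' (fun e f => s e = t f)

/-- Global dimension of a ring `B` as an element of `ℕ∞`, via finitely generated modules. -/
noncomputable def gldimVal (B : Type) [Ring B] : ℕ∞ :=
  sInf {x : ℕ∞ | ∃ n : ℕ, x = n ∧ ∀ M : Mdl B, Module.Finite B M → pdLE B M n}

end PathAlgebra

section Stmt17

open FreeAlgebra

/-- Arrows of the quiver: `a : 1 → 2`, `b : 2 → 1`, and a loop `g` at `2`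
(vertex `1` is `0 : Fin 2`, vertex `2` is `1 : Fin 2`). -/
inductive Arr3 : Type
  | a | b | g

instance : Inhabited Arr3 := ⟨Arr3.a⟩

def s17 : Arr3 → Fin 2
  | Arr3.a => 0 | Arr3.b => 1 | Arr3.g => 1

def t17 : Arr3 → Fin 2
  | Arr3.a => 1 | Arr3.b => 0 | Arr3.g => 1

variable (k : Type) [Field k]

/-- Relations of `A = kQ/⟨αβ, γ²⟩` (products written in multiplication order, so `αβ`
is `α` after `β`). -/
inductive A17Rel : FreeAlgebra k (PAGen (Fin 2) Arr3) → FreeAlgebra k (PAGen (Fin 2) Arr3) → Prop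
  | vert_idem (v : Fin 2) :
      A17Rel (ι k (PAGen.vert v) * ι k (PAGen.vert v)) (ι k (PAGen.vert v))
  | vert_orth (v w : Fin 2) (h : v ≠ w) :
      A17Rel (ι k (PAGen.vert v) * ι k (PAGen.vert w)) 0
  | sum_vert : A17Rel (∑ v : Fin 2, ι k (PAGen.vert v)) 1
  | arr_tgt (e : Arr3) :
      A17Rel (ι k (PAGen.vert (t17 e)) * ι k (PAGen.arr e)) (ι k (PAGen.arr e))
  | arr_src (e : Arr3) :
      A17Rel (ι k (PAGen.arr e) * ι k (PAGen.vert (s17 e))) (ι k (PAGen.arr e))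
  | rel_ab : A17Rel (ι k (PAGen.arr Arr3.a) * ι k (PAGen.arr Arr3.b)) 0
  | rel_gg : A17Rel (ι k (PAGen.arr Arr3.g) * ι k (PAGen.arr Arr3.g)) 0

/-- The monomial algebra `A = kQ/⟨αβ, γ²⟩`. -/
abbrev A17 : Type := RingQuot (A17Rel k)

/-- The element of `A` determined by a path (list of arrows in multiplication order). -/
noncomputable def pathEl17 (l : List Arr3) : A17 k :=
  (l.map (fun e => RingQuot.mkAlgHom k (A17Rel k) (ι k (PAGen.arr e)))).prod

/-- The image of the loop `γ` in `A`. -/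
noncomputable def gammaEl : A17 k := pathEl17 k [Arr3.g]

/-- The ideal `Aγ`. -/
noncomputable def AGamma : Submodule (A17 k) (A17 k) :=
  Submodule.span (A17 k) {gammaEl k}

/-- A nonzero nontrivial path of `A`. -/
def NZPath17 (l : List Arr3) : Prop :=
  l ≠ [] ∧ IsPathList (Fin 2) Arr3 s17 t17 l ∧ pathEl17 k l ≠ 0

/-- Source of a path (in multiplication order, the source of its last arrow). -/
def srcL17 (l : List Arr3) : Fin 2 := s17 l.getLast!

/-- Target of a path (the target of its first arrow in multiplication order). -/
def tgtL17 (l : List Arr3) : Fin 2 := t17 l.head!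

/-- `(p, q)` is a perfect pair: `p`, `q` nonzero nontrivial paths with `s(p) = t(q)`,
`pq = 0`, `R(p) = {q}` and `L(q) = {p}`. -/
def PerfectPair17 (p q : List Arr3) : Prop :=
  NZPath17 k p ∧ NZPath17 k q ∧ srcL17 p = tgtL17 q ∧
  pathEl17 k p * pathEl17 k q = 0 ∧
  (∀ q' : List Arr3, NZPath17 k q' → tgtL17 q' = srcL17 p →
    pathEl17 k p * pathEl17 k q' = 0 → ∃ q'', q' = q ++ q'') ∧
  (∀ p' : List Arr3, NZPath17 k p' → srcL17 p' = tgtL17 q →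
    pathEl17 k p' * pathEl17 k q = 0 → ∃ p'', p' = p'' ++ p)

/-- `p` is a perfect path: it lies on a cycle of perfect pairs. -/
def PerfectPath17 (p : List Arr3) : Prop :=
  ∃ (n : ℕ) (c : ℕ → List Arr3), 1 ≤ n ∧ c 0 = p ∧ c n = p ∧
    ∀ i < n, PerfectPair17 k (c i) (c (i + 1))

section PartialMatrix

variable {R : Type} [Semiring R] {n : Type} [DecidableEq n]

def partialMatrix (φ : n → Option n) : Matrix n n R :=
  Matrix.of fun i j => if φ j = some i then 1 else 0

theorem partialMatrix_mul_partialMatrix [Fintype n] (φ ψ : n → Option n) :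
    (partialMatrix φ * partialMatrix ψ : Matrix n n R) =
      partialMatrix fun j => (ψ j).bind φ := by
  ext i j
  rw [Matrix.mul_apply]
  simp only [partialMatrix, Matrix.of_apply]
  have hsum : ∀ x : Option n, (∑ u, (if φ u = some i then (1 : R) else 0) *
      if x = some u then 1 else 0) = if x.bind φ = some i then 1 else 0 := by
    rintro (_ | u) <;> simp
  exact hsum (ψ j)

theorem partialMatrix_none : (partialMatrix fun _ => none : Matrix n n R) = 0 := by
  ext i j
  simp [partialMatrix]

end PartialMatrix

section ProjectiveCover

variable {A : Type} [Ring A] {P Q M : Type} [AddCommGroup P] [Module A P] [AddCommGroup Q]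
  [Module A Q] [AddCommGroup M] [Module A M]

theorem IsProjCover.surjective_of_surjective_comp {f : P →ₗ[A] M} (hf : IsProjCover A f)
    {g : Q →ₗ[A] P} (hfg : Surjective (f ∘ₗ g)) : Surjective g := by
  by_contra hg
  refine hf.2.2 (LinearMap.range g) (fun h => hg (LinearMap.range_eq_top.1 h)) fun m => ?_
  obtain ⟨q, rfl⟩ := hfg m
  exact ⟨⟨g q, q, rfl⟩, rfl⟩

theorem IsProjCover.injective_of_projective [Module.Projective A M] {f : P →ₗ[A] M}
    (hf : IsProjCover A f) : Injective f := by
  obtain ⟨s, hs⟩ := Module.projective_lifting_property f LinearMap.id hf.2.1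
  have hfs : LeftInverse f s := LinearMap.congr_fun hs
  have hs_surj : Surjective s := hf.surjective_of_surjective_comp (hs ▸ surjective_id)
  exact (hfs.rightInverse_of_surjective hs_surj).injective

theorem IsProjCover.nonempty_ker_equiv {f : P →ₗ[A] M} {f' : Q →ₗ[A] M}
    (hf : IsProjCover A f) (hf' : IsProjCover A f') :
    Nonempty (LinearMap.ker f ≃ₗ[A] LinearMap.ker f') := by
  have := hf.1
  have := hf'.1
  obtain ⟨g, hg⟩ := Module.projective_lifting_property f' f hf'.2.1
  have hg_surj : Surjective g := hf'.surjective_of_surjective_comp (hg ▸ hf.2.1)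
  obtain ⟨s, hs⟩ := Module.projective_lifting_property g LinearMap.id hg_surj
  have hgs : LeftInverse g s := LinearMap.congr_fun hs
  have hs_surj : Surjective s := by
    refine hf.surjective_of_surjective_comp ?_
    rw [← hg, LinearMap.comp_assoc, hs, LinearMap.comp_id]
    exact hf'.2.1
  let e : P ≃ₗ[A] Q :=
    .ofBijective g ⟨(hgs.rightInverse_of_surjective hs_surj).injective, hg_surj⟩
  refine ⟨e.ofSubmodules _ _ ?_⟩
  rw [← hg, LinearMap.ker_comp]
  exact Submodule.map_comap_eq_of_surjective hg_surj _

theorem Submodule.projective_of_mul_eq_self {P : Submodule A A} {e : A} (he : e ∈ P)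
    (hPe : ∀ x ∈ P, x * e = x) : Module.Projective A P := by
  refine .of_split P.subtype
    (LinearMap.codRestrict _ (LinearMap.toSpanSingleton A A e) fun x => P.smul_mem x he) ?_
  ext x
  exact hPe x x.2

theorem Submodule.isProjCover_of_mul_eq_self {P : Submodule A A} {e : A} (he : e ∈ P)
    (hPe : ∀ x ∈ P, x * e = x) {f : P →ₗ[A] M} (hf : Surjective f)
    (hker : ∀ u ∈ LinearMap.ker f, (u : A) * u = 0) : IsProjCover A f := by
  refine ⟨projective_of_mul_eq_self he hPe, hf, fun N hN hfN => hN ?_⟩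
  obtain ⟨n, hn⟩ := hfN (f ⟨e, he⟩)
  set u : P := ⟨e, he⟩ - n
  have hu : u ∈ LinearMap.ker f := by simp [u, ← hn]
  have heN : ⟨e, he⟩ ∈ N := by
    -- `u² = 0` and `ue = u` give `(1 + u)(e - u) = e`
    have hεn : (⟨e, he⟩ : P) = (1 + (u : A)) • (n : P) := by
      have hn_eq : ((n : P) : A) = e - u := by simp [u]
      ext
      rw [Submodule.coe_smul, hn_eq, smul_eq_mul, add_mul, one_mul, mul_sub, hPe u u.2, hker u hu]
      abel
    exact hεn ▸ N.smul_mem _ n.2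
  rw [eq_top_iff]
  rintro x -
  have hx : x = (x : A) • (⟨e, he⟩ : P) := Subtype.ext (hPe x x.2).symm
  exact hx ▸ N.smul_mem _ heN

end ProjectiveCover

namespace A17

/-- The nine paths that are nonzero in `A`, written in multiplication order (`ba` is `βα`). -/
inductive BasisPath : Type
  | e1 | e2 | a | b | g | ba | ga | bg | bga
  deriving DecidableEq

namespace BasisPath

instance : Fintype BasisPath :=
  ⟨{e1, e2, a, b, g, ba, ga, bg, bga}, fun p => by cases p <;> decide⟩

theorem sum_univ {M : Type} [AddCommMonoid M] (f : BasisPath → M) :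
    ∑ p, f p = f e1 + f e2 + f a + f b + f g + f ba + f ga + f bg + f bga := by
  change ∑ p ∈ {e1, e2, a, b, g, ba, ga, bg, bga}, f p = _
  simp [add_assoc]

/-- `concat p q` is the path `pq`, or `none` when `pq = 0` in `A`. -/
def concat : BasisPath → BasisPath → Option BasisPath
  | e1, e1 => some e1 | e1, b => some b | e1, ba => some ba | e1, bg => some bg
  | e1, bga => some bga
  | e2, e2 => some e2 | e2, a => some a | e2, g => some g | e2, ga => some ga
  | a, e1 => some a
  | b, e2 => some b | b, a => some ba | b, g => some bg | b, ga => some bga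
  | g, e2 => some g | g, a => some ga
  | ba, e1 => some ba
  | ga, e1 => some ga
  | bg, e2 => some bg | bg, a => some bga
  | bga, e1 => some bga
  | _, _ => none

theorem concat_assoc (p q r : BasisPath) :
    (concat q r).bind (concat p) = (concat p q).bind (concat · r) := by
  revert p q r; decide

def srcIdem : BasisPath → BasisPath
  | e1 => e1 | e2 => e2 | a => e1 | b => e2 | g => e2 | ba => e1 | ga => e1 | bg => e2
  | bga => e1

theorem concat_srcIdem_eq_some_iff (p q : BasisPath) : concat q (srcIdem p) = some p ↔ q = p := by
  revert p q; decide

variable (R : Type) [Semiring R]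

theorem partialMatrix_concat_mul (r r' : BasisPath) :
    (partialMatrix (concat r) * partialMatrix (concat r') : Matrix BasisPath BasisPath R) =
      (concat r r').elim 0 (partialMatrix ∘ concat) := by
  rw [partialMatrix_mul_partialMatrix]
  simp_rw [concat_assoc]
  cases concat r r' <;> simp [partialMatrix_none]

theorem partialMatrix_concat_e1_add_e2 :
    (partialMatrix (concat e1) + partialMatrix (concat e2) : Matrix BasisPath BasisPath R) = 1 := by
  ext p q
  cases p <;> cases q <;> simp [partialMatrix, concat]

end BasisPath

open BasisPath

variable {k}

noncomputable def gen (x : PAGen (Fin 2) Arr3) : A17 k := RingQuot.mkAlgHom k (A17Rel k) (ι k x)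

open PAGen

theorem one_eq_gen_add_gen : (1 : A17 k) = gen (vert 0) + gen (vert 1) := by
  simpa [Fin.sum_univ_two, gen] using (RingQuot.mkAlgHom_rel k (A17Rel.sum_vert (k := k))).symm

theorem gen_vert_mul_gen_vert (v w : Fin 2) :
    (gen (vert v) * gen (vert w) : A17 k) = if v = w then gen (vert v) else 0 := by
  split_ifs with h
  · subst h; simpa [gen] using RingQuot.mkAlgHom_rel k (A17Rel.vert_idem (k := k) v)
  · simpa [gen] using RingQuot.mkAlgHom_rel k (A17Rel.vert_orth (k := k) v w h)

theorem gen_vert_mul_gen_arr (v : Fin 2) (e : Arr3) :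
    (gen (vert v) * gen (arr e) : A17 k) = if v = t17 e then gen (arr e) else 0 := by
  have htgt : (gen (vert (t17 e)) * gen (arr e) : A17 k) = gen (arr e) := by
    simpa [gen] using RingQuot.mkAlgHom_rel k (A17Rel.arr_tgt (k := k) e)
  split_ifs with h
  · rw [h, htgt]
  · rw [← htgt, ← mul_assoc, gen_vert_mul_gen_vert, if_neg h, zero_mul]

theorem gen_arr_mul_gen_vert (e : Arr3) (v : Fin 2) :
    (gen (arr e) * gen (vert v) : A17 k) = if v = s17 e then gen (arr e) else 0 := by
  have hsrc : (gen (arr e) * gen (vert (s17 e)) : A17 k) = gen (arr e) := by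
    simpa [gen] using RingQuot.mkAlgHom_rel k (A17Rel.arr_src (k := k) e)
  split_ifs with h
  · rw [h, hsrc]
  · rw [← hsrc, mul_assoc, gen_vert_mul_gen_vert, if_neg (Ne.symm h), mul_zero]

theorem gen_arr_mul_gen_arr_of_ne {e f : Arr3} (h : s17 e ≠ t17 f) :
    (gen (arr e) * gen (arr f) : A17 k) = 0 := by
  calc (gen (arr e) * gen (arr f) : A17 k)
      = gen (arr e) * gen (vert (s17 e)) * (gen (vert (t17 f)) * gen (arr f)) := by
        rw [gen_arr_mul_gen_vert, if_pos rfl, gen_vert_mul_gen_arr, if_pos rfl]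
    _ = 0 := by
        rw [mul_assoc, ← mul_assoc (gen (vert _)), gen_vert_mul_gen_vert, if_neg h, zero_mul,
          mul_zero]

theorem gen_a_mul_gen_b : (gen (arr Arr3.a) * gen (arr Arr3.b) : A17 k) = 0 := by
  simpa [gen] using RingQuot.mkAlgHom_rel k (A17Rel.rel_ab (k := k))

theorem gen_g_mul_gen_g : (gen (arr Arr3.g) * gen (arr Arr3.g) : A17 k) = 0 := by
  simpa [gen] using RingQuot.mkAlgHom_rel k (A17Rel.rel_gg (k := k))

theorem gen_vert_mul_gen_arr_assoc (v : Fin 2) (e : Arr3) (z : A17 k) :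
    gen (vert v) * (gen (arr e) * z) = (if v = t17 e then gen (arr e) else 0) * z := by
  rw [← mul_assoc, gen_vert_mul_gen_arr]

theorem gen_arr_mul_gen_arr_assoc_of_ne {e f : Arr3} (h : s17 e ≠ t17 f) (z : A17 k) :
    gen (arr e) * (gen (arr f) * z) = 0 := by
  rw [← mul_assoc, gen_arr_mul_gen_arr_of_ne h, zero_mul]

theorem gen_a_mul_gen_b_assoc (z : A17 k) : gen (arr Arr3.a) * (gen (arr Arr3.b) * z) = 0 := by
  rw [← mul_assoc, gen_a_mul_gen_b, zero_mul]

theorem gen_g_mul_gen_g_assoc (z : A17 k) : gen (arr Arr3.g) * (gen (arr Arr3.g) * z) = 0 := by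
  rw [← mul_assoc, gen_g_mul_gen_g, zero_mul]

noncomputable def basisEl : BasisPath → A17 k
  | .e1 => gen (vert 0)
  | .e2 => gen (vert 1)
  | .a => gen (arr .a)
  | .b => gen (arr .b)
  | .g => gen (arr .g)
  | .ba => gen (arr .b) * gen (arr .a)
  | .ga => gen (arr .g) * gen (arr .a)
  | .bg => gen (arr .b) * gen (arr .g)
  | .bga => gen (arr .b) * (gen (arr .g) * gen (arr .a))

theorem basisEl_mul_basisEl (p q : BasisPath) :
    (basisEl p * basisEl q : A17 k) = (concat p q).elim 0 basisEl := by
  cases p <;> cases q <;>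
    simp (disch := decide) [basisEl, concat, mul_assoc, gen_vert_mul_gen_vert,
      gen_vert_mul_gen_arr, gen_arr_mul_gen_vert, gen_arr_mul_gen_arr_of_ne, gen_a_mul_gen_b,
      gen_g_mul_gen_g, gen_vert_mul_gen_arr_assoc, gen_arr_mul_gen_arr_assoc_of_ne,
      gen_a_mul_gen_b_assoc, gen_g_mul_gen_g_assoc, s17, t17]

def genPath : PAGen (Fin 2) Arr3 → BasisPath
  | vert 0 => .e1
  | vert 1 => .e2
  | arr .a => .a
  | arr .b => .b
  | arr .g => .g

theorem basisEl_genPath (x : PAGen (Fin 2) Arr3) : basisEl (genPath x) = (gen x : A17 k) := by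
  rcases x with v | e
  · fin_cases v <;> rfl
  · cases e <;> rfl

variable (k) in
/-- The left regular representation of `A` in the basis of nonzero paths. -/
noncomputable def toMatrix : A17 k →ₐ[k] Matrix BasisPath BasisPath k :=
  RingQuot.liftAlgHom k ⟨FreeAlgebra.lift k fun x => partialMatrix (concat (genPath x)), by
    intro x y h
    cases h with
    | vert_idem v => fin_cases v <;> simp [partialMatrix_concat_mul, genPath, concat]
    | vert_orth v w h =>
      fin_cases v <;> fin_cases w <;> simp_all [partialMatrix_concat_mul, genPath, concat]
    | sum_vert => simpa [Fin.sum_univ_two, genPath] using partialMatrix_concat_e1_add_e2 k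
    | arr_tgt e | arr_src e =>
      cases e <;> simp [partialMatrix_concat_mul, genPath, concat, s17, t17]
    | rel_ab | rel_gg => simp [partialMatrix_concat_mul, genPath, concat]⟩

theorem toMatrix_gen (x : PAGen (Fin 2) Arr3) :
    toMatrix k (gen x) = partialMatrix (concat (genPath x)) := by
  simp [toMatrix, gen, RingQuot.liftAlgHom_mkAlgHom_apply]

theorem toMatrix_basisEl (p : BasisPath) :
    toMatrix k (basisEl p) = partialMatrix (concat p) := by
  cases p <;> simp [basisEl, toMatrix_gen, partialMatrix_concat_mul, genPath, concat]

variable (k) in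
/-- The coefficient of the path `p`, read off in column `srcIdem p` of the regular
representation. -/
noncomputable def coord (p : BasisPath) : A17 k →ₗ[k] k :=
  Matrix.entryLinearMap k k p (srcIdem p) ∘ₗ (toMatrix k).toLinearMap

theorem coord_basisEl (p q : BasisPath) : coord k p (basisEl q) = if q = p then 1 else 0 := by
  simp [coord, toMatrix_basisEl, partialMatrix, concat_srcIdem_eq_some_iff]

theorem basisEl_ne_zero (p : BasisPath) : (basisEl p : A17 k) ≠ 0 := by
  intro h
  simpa [h] using coord_basisEl (k := k) p p

theorem span_range_basisEl : Submodule.span k (Set.range (basisEl (k := k))) = ⊤ := by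
  set S := Submodule.span k (Set.range (basisEl (k := k)))
  have hmul : ∀ x ∈ S, ∀ y ∈ S, x * y ∈ S := by
    have hSS : S * S ≤ S := by
      rw [Submodule.span_mul_span, Submodule.span_le]
      rintro _ ⟨_, ⟨p, rfl⟩, _, ⟨q, rfl⟩, rfl⟩
      change basisEl p * basisEl q ∈ S
      rw [basisEl_mul_basisEl]
      cases concat p q
      · exact S.zero_mem
      · exact Submodule.subset_span ⟨_, rfl⟩
    exact fun x hx y hy => hSS (Submodule.mul_mem_mul hx hy)
  have hgen (x : PAGen (Fin 2) Arr3) : gen x ∈ S :=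
    basisEl_genPath (k := k) x ▸ Submodule.subset_span ⟨_, rfl⟩
  rw [eq_top_iff]
  rintro x -
  obtain ⟨y, rfl⟩ := RingQuot.mkAlgHom_surjective k (A17Rel k) x
  induction y using FreeAlgebra.induction with
  | grade0 r =>
    rw [AlgHom.commutes, Algebra.algebraMap_eq_smul_one, one_eq_gen_add_gen]
    exact S.smul_mem r (S.add_mem (hgen _) (hgen _))
  | grade1 x => exact hgen x
  | mul x y hx hy => exact map_mul (RingQuot.mkAlgHom k (A17Rel k)) x y ▸ hmul _ hx _ hy
  | add x y hx hy => exact map_add (RingQuot.mkAlgHom k (A17Rel k)) x y ▸ S.add_mem hx hy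

theorem sum_coord_smul_basisEl (x : A17 k) : ∑ p, coord k p x • basisEl p = x := by
  obtain ⟨c, rfl⟩ := (Submodule.mem_span_range_iff_exists_fun k).1
    (span_range_basisEl (k := k) ▸ Submodule.mem_top : x ∈ _)
  congr! with p
  simp [coord_basisEl]

theorem gammaEl_eq : gammaEl k = basisEl .g := by
  simp [gammaEl, pathEl17, basisEl, gen]

theorem mem_AGamma_iff {x : A17 k} : x ∈ AGamma k ↔ ∃ r, r * basisEl .g = x := by
  rw [AGamma, gammaEl_eq]
  exact Ideal.mem_span_singleton'

theorem basisEl_g_mul_mul_basisEl_g (r : A17 k) : basisEl .g * r * basisEl .g = 0 := by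
  rw [← sum_coord_smul_basisEl r, Finset.mul_sum, Finset.sum_mul]
  refine Finset.sum_eq_zero fun p _ => ?_
  rw [mul_smul_comm, smul_mul_assoc]
  cases p <;> simp [basisEl_mul_basisEl, concat]

theorem mul_self_eq_zero_of_mem_AGamma {u : A17 k} (hu : u ∈ AGamma k) : u * u = 0 := by
  obtain ⟨r, rfl⟩ := mem_AGamma_iff.1 hu
  rw [mul_assoc, ← mul_assoc (basisEl _), basisEl_g_mul_mul_basisEl_g, mul_zero]

variable (k) in
noncomputable def Ae2 : Submodule (A17 k) (A17 k) := Submodule.span (A17 k) {basisEl .e2}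

theorem mul_basisEl_e2_of_mem_Ae2 {x : A17 k} (hx : x ∈ Ae2 k) : x * basisEl .e2 = x := by
  obtain ⟨r, rfl⟩ := Ideal.mem_span_singleton'.1 hx
  simp [mul_assoc, basisEl_mul_basisEl, concat]

theorem mem_AGamma_of_mem_Ae2 {x : A17 k} (hx : x ∈ Ae2 k) (hxg : x * basisEl .g = 0) :
    x ∈ AGamma k := by
  have hx' : x = coord k .e2 x • basisEl .e2 + coord k .b x • basisEl .b +
      coord k .g x • basisEl .g + coord k .bg x • basisEl .bg := by
    conv_lhs => rw [← mul_basisEl_e2_of_mem_Ae2 hx, ← sum_coord_smul_basisEl x]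
    simp [sum_univ, add_mul, basisEl_mul_basisEl, concat]
  have hxg' : x * basisEl .g = coord k .e2 x • basisEl .g + coord k .b x • basisEl .bg := by
    conv_lhs => rw [hx']
    simp [add_mul, basisEl_mul_basisEl, concat]
  rw [hxg] at hxg'
  have h_e2 : coord k .e2 x = 0 := by simpa [coord_basisEl] using congr(coord k .g $hxg').symm
  have h_b : coord k .b x = 0 := by simpa [coord_basisEl] using congr(coord k .bg $hxg').symm
  refine mem_AGamma_iff.2 ⟨coord k .g x • 1 + coord k .bg x • basisEl .b, ?_⟩
  conv_rhs => rw [hx', h_e2, h_b]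
  simp [add_mul, basisEl_mul_basisEl, concat]

theorem AGamma_le_Ae2 : AGamma k ≤ Ae2 k := by
  rw [AGamma, Submodule.span_le, Set.singleton_subset_iff, gammaEl_eq]
  exact Ideal.mem_span_singleton'.2 ⟨basisEl .g, by simp [basisEl_mul_basisEl, concat]⟩

variable (k) in
noncomputable def rightMulGamma : Ae2 k →ₗ[A17 k] AGamma k :=
  LinearMap.codRestrict (AGamma k)
    (LinearMap.toSpanSingleton (A17 k) (A17 k) (basisEl .g) ∘ₗ (Ae2 k).subtype)
    fun x => mem_AGamma_iff.2 ⟨x, rfl⟩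

theorem coe_rightMulGamma_apply (x : Ae2 k) :
    (rightMulGamma k x : A17 k) = (x : A17 k) * basisEl .g := rfl

theorem rightMulGamma_surjective : Surjective (rightMulGamma k) := by
  rintro ⟨_, hy⟩
  obtain ⟨r, rfl⟩ := mem_AGamma_iff.1 hy
  refine ⟨⟨r * basisEl .e2, Ideal.mem_span_singleton'.2 ⟨r, rfl⟩⟩, Subtype.ext ?_⟩
  simp [coe_rightMulGamma_apply, mul_assoc, basisEl_mul_basisEl, concat]

theorem mem_ker_rightMulGamma {x : Ae2 k} :
    x ∈ LinearMap.ker (rightMulGamma k) ↔ (x : A17 k) ∈ AGamma k := by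
  rw [LinearMap.mem_ker, ← Subtype.val_inj, coe_rightMulGamma_apply, ZeroMemClass.coe_zero]
  constructor
  · exact mem_AGamma_of_mem_Ae2 x.2
  · intro h
    obtain ⟨r, hr⟩ := mem_AGamma_iff.1 h
    simp [← hr, mul_assoc, basisEl_mul_basisEl, concat]

theorem ker_rightMulGamma :
    LinearMap.ker (rightMulGamma k) = (AGamma k).comap (Ae2 k).subtype := by
  ext x
  exact mem_ker_rightMulGamma

theorem isProjCover_rightMulGamma :
    IsProjCover (A17 k) (P := Ae2 k) (M := AGamma k) (rightMulGamma k) :=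
  Submodule.isProjCover_of_mul_eq_self (Submodule.mem_span_singleton_self _)
    (fun _ => mul_basisEl_e2_of_mem_Ae2) rightMulGamma_surjective fun _ hu =>
    mul_self_eq_zero_of_mem_AGamma (mem_ker_rightMulGamma.1 hu)

theorem nonempty_equiv_AGamma_of_isSyz {S : Mdl (A17 k)}
    (hS : IsSyz (A17 k) S (ModuleCat.of (A17 k) (AGamma k))) :
    Nonempty (S ≃ₗ[A17 k] AGamma k) := by
  obtain ⟨P, f, -, hf, ⟨eS⟩⟩ := hS
  obtain ⟨eK⟩ := hf.nonempty_ker_equiv isProjCover_rightMulGamma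
  exact ⟨eS ≪≫ₗ eK ≪≫ₗ LinearEquiv.ofEq _ _ ker_rightMulGamma ≪≫ₗ
    Submodule.comapSubtypeEquivOfLe AGamma_le_Ae2⟩

theorem not_projective_AGamma : ¬ Module.Projective (A17 k) (AGamma k) := by
  intro
  have hγ : basisEl .g ∈ Ae2 k :=
    AGamma_le_Ae2 (gammaEl_eq (k := k) ▸ Submodule.mem_span_singleton_self _)
  have h0 : rightMulGamma k ⟨_, hγ⟩ = rightMulGamma k 0 := by
    ext
    simp [coe_rightMulGamma_apply, basisEl_mul_basisEl, concat]
  have hinj := isProjCover_rightMulGamma.injective_of_projective h0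
  exact basisEl_ne_zero .g congr(Subtype.val $hinj)

theorem pathEl17_cons (e : Arr3) (l : List Arr3) :
    pathEl17 k (e :: l) = gen (arr e) * pathEl17 k l := by
  simp [pathEl17, gen]

theorem pathEl17_append (l₁ l₂ : List Arr3) :
    pathEl17 k (l₁ ++ l₂) = pathEl17 k l₁ * pathEl17 k l₂ := by
  simp [pathEl17]

theorem pathEl17_singleton (e : Arr3) : pathEl17 k [e] = gen (arr e) := by
  simp [pathEl17, gen]

theorem eq_nil_of_nzPath17_a_cons {l : List Arr3} (hl : NZPath17 k (Arr3.a :: l)) : l = [] := by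
  obtain ⟨-, hchain, hne⟩ := hl
  rcases l with _ | ⟨f, l⟩
  · rfl
  · have hf : s17 Arr3.a = t17 f := (List.isChain_cons_cons.1 hchain).1
    obtain rfl : f = Arr3.b := by cases f <;> simp_all [s17, t17]
    refine absurd ?_ hne
    rw [pathEl17_cons, pathEl17_cons, ← mul_assoc, gen_a_mul_gen_b, zero_mul]

theorem eq_nil_of_nzPath17_append_b {l : List Arr3} (hl : NZPath17 k (l ++ [Arr3.b])) :
    l = [] := by
  obtain ⟨-, hchain, hne⟩ := hl
  rcases l.eq_nil_or_concat with rfl | ⟨l, f, rfl⟩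
  · rfl
  · have hf : s17 f = t17 Arr3.b := (List.isChain_append.1 hchain).2.2 f (by simp) _ rfl
    obtain rfl : f = Arr3.a := by cases f <;> simp_all [s17, t17]
    refine absurd ?_ hne
    rw [List.concat_eq_append, List.append_assoc, pathEl17_append, List.singleton_append,
      pathEl17_cons, pathEl17_singleton, gen_a_mul_gen_b, mul_zero]

theorem perfectPair17_g_g : PerfectPair17 k [Arr3.g] [Arr3.g] := by
  have hg : NZPath17 k [Arr3.g] := ⟨List.cons_ne_nil _ _, List.isChain_singleton _,
    by rw [pathEl17_singleton]; exact basisEl_ne_zero .g⟩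
  refine ⟨hg, hg, rfl, by simp [pathEl17_singleton, gen_g_mul_gen_g], ?_, ?_⟩
  · rintro q hq htgt hgq
    rcases q with _ | ⟨e, q⟩
    · exact absurd rfl hq.1
    cases e
    · obtain rfl := eq_nil_of_nzPath17_a_cons hq
      rw [pathEl17_singleton, pathEl17_singleton] at hgq
      exact absurd hgq (basisEl_ne_zero .ga)
    · exact absurd htgt (by simp [srcL17, tgtL17, s17, t17])
    · exact ⟨q, rfl⟩
  · rintro p hp hsrc hpg
    rcases p.eq_nil_or_concat with rfl | ⟨p, e, rfl⟩
    · exact absurd rfl hp.1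
    rw [List.concat_eq_append] at hp hsrc hpg ⊢
    cases e
    · exact absurd hsrc (by simp [srcL17, tgtL17, s17, t17])
    · obtain rfl := eq_nil_of_nzPath17_append_b hp
      rw [List.nil_append, pathEl17_singleton, pathEl17_singleton] at hpg
      exact absurd hpg (basisEl_ne_zero .bg)
    · exact ⟨p, rfl⟩

theorem perfectPath17_g : PerfectPath17 k [Arr3.g] :=
  ⟨1, fun _ => [Arr3.g], le_rfl, rfl, rfl, fun _ _ => perfectPair17_g_g⟩

end A17

/-- For `A = kQ/⟨αβ, γ²⟩` the module `Aγ` satisfies `Ω(Aγ) ≅ Aγ` (it is `1`-periodic),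
it is not projective, and `γ` is a perfect path. -/
theorem stmt17 (k : Type) [Field k] :
    (∀ S : Mdl (A17 k), IsSyz (A17 k) S (ModuleCat.of (A17 k) (AGamma k)) →
      Nonempty (S ≃ₗ[A17 k] AGamma k)) ∧
    ¬ Module.Projective (A17 k) (AGamma k) ∧
    PerfectPath17 k [Arr3.g] :=
  ⟨fun _ => A17.nonempty_equiv_AGamma_of_isSyz, A17.not_projective_AGamma, A17.perfectPath17_g⟩

end Stmt17
end
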